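/- Let e be an elementary forest with exactly k carets (i.e., exactly k of its trees are carets and the rest are leaves). Then the set {e′ : e is an expansion of e′} of forests of which e is an expansion, partially ordered by the expansion relation, is order-isomorphic to the boolean lattice of all subsets of a k-element set (Finset (Fin k) ordered by inclusion). In particular every forest of which e is an expansion is elementary, and this interval is a boolean lattice with 2^k elements. -/

import Mathlib

/-- Finite rooted binary trees. -/
inductive T : Type
  | leaf : T
  | node : T → T → T
  deriving DecidableEq

/-- A caret is the tree with two leaves. -/
def caret : T := T.node T.leaf T.leaf

/-- The number of leaves of a tree. -/
def T.leaves : T → ℕ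
  | .leaf => 1
  | .node l r => l.leaves + r.leaves

/-- The total number of leaves of a forest (list of trees); the leaves are
ordered left to right. -/
def leavesList (f : List T) : ℕ := (f.map T.leaves).sum

/-- Replace the `k`-th (`0`-indexed, left to right) leaf of a tree with a caret. -/
def T.expandAt : T → ℕ → T
  | .leaf, _ => caret
  | .node l r, k =>
      if k < l.leaves then .node (l.expandAt k) r
      else .node l (r.expandAt (k - l.leaves))

/-- The `k`-th simple expansion of a forest: replace its `k`-th (`0`-indexed,
left to right) leaf with a caret. -/
def expandListAt : List T → ℕ → List T
  | [], _ => []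
  | t :: ts, k =>
      if k < t.leaves then t.expandAt k :: ts
      else t :: expandListAt ts (k - t.leaves)

/-- `Expands f' f` means that `f'` is an expansion of `f`, i.e. `f'` is obtained
from `f` by applying finitely many simple expansions. -/
inductive Expands : List T → List T → Prop
  | refl (f : List T) : Expands f f
  | step {g f : List T} (k : ℕ) (hk : k < leavesList g) (h : Expands g f) :
      Expands (expandListAt g k) f

/-- The trivial forest `1_n` with `n` roots. -/
def trivialForest (n : ℕ) : List T := List.replicate n T.leaf

/-- A forest is elementary if each of its trees is either trivial (a leaf)
or a single caret. -/
def Elementary (f : List T) : Prop := ∀ t ∈ f, t = T.leaf ∨ t = caret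

/-- The elementary core of a forest: the elementary forest with the same number of
roots whose `k`-th tree is a caret if the `k`-th tree of `f` is non-trivial, and a
leaf otherwise. -/
def core (f : List T) : List T :=
  f.map (fun t => match t with | T.leaf => T.leaf | T.node _ _ => caret)

/-- collapse relation on trees -/
def R (t t' : T) : Prop := t' = t ∨ (t = caret ∧ t' = T.leaf)

lemma R_refl (t : T) : R t t := Or.inl rfl

lemma R.trans {a b c : T} (h1 : R a b) (h2 : R b c) : R a c := by
  rcases h1 with rfl | ⟨rfl, rfl⟩
  · exact h2
  · rcases h2 with rfl | ⟨h, _⟩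
    · exact Or.inr ⟨rfl, rfl⟩
    · exact absurd h (by simp [caret])

lemma leaves_pos (t : T) : 0 < t.leaves := by
  induction t with
  | leaf => simp [T.leaves]
  | node l r ihl ihr => simp [T.leaves]; omega

lemma leaves_expandAt (t : T) (j : ℕ) : (t.expandAt j).leaves = t.leaves + 1 := by
  induction t generalizing j with
  | leaf => rfl
  | node l r ihl ihr =>
    simp only [T.expandAt]
    split <;> simp [T.leaves, ihl, ihr] <;> omega

lemma eq_leaf_of_leaves_eq_one {t : T} (h : t.leaves = 1) : t = T.leaf := by
  cases t with
  | leaf => rfl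
  | node l r =>
    have := leaves_pos l; have := leaves_pos r
    simp [T.leaves] at h; omega

lemma leavesList_cons (t : T) (ts : List T) :
    leavesList (t :: ts) = t.leaves + leavesList ts := by simp [leavesList]

lemma leavesList_append (a b : List T) :
    leavesList (a ++ b) = leavesList a + leavesList b := by simp [leavesList]

lemma stepA {g : List T} {j : ℕ} (hj : j < leavesList g)
    (he : Elementary (expandListAt g j)) :
    Elementary g ∧ List.Forall₂ R (expandListAt g j) g := by
  induction g generalizing j with
  | nil => simp [leavesList] at hj
  | cons t ts ih =>
    rw [leavesList_cons] at hj
    by_cases h : j < t.leaves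
    · rw [expandListAt, if_pos h] at he ⊢
      have hhead := he (t.expandAt j) (by simp)
      have hne : t.expandAt j ≠ T.leaf := by
        intro hl
        have h2 := leaves_expandAt t j
        rw [hl] at h2
        have h3 := leaves_pos t
        have h4 : T.leaf.leaves = 1 := rfl
        omega
      have hc : t.expandAt j = caret := hhead.resolve_left hne
      have ht : t = T.leaf := by
        apply eq_leaf_of_leaves_eq_one
        have h2 := leaves_expandAt t j
        rw [hc] at h2
        have h4 : caret.leaves = 2 := rfl
        omega
      subst ht
      constructor
      · intro x hx
        rcases List.mem_cons.mp hx with rfl | hx'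
        · exact Or.inl rfl
        · exact he x (List.mem_cons_of_mem _ hx')
      · exact List.Forall₂.cons (by rw [hc]; exact Or.inr ⟨rfl, rfl⟩)
          (List.forall₂_same.2 fun x _ => R_refl x)
    · rw [expandListAt, if_neg h] at he ⊢
      have hj' : j - t.leaves < leavesList ts := by omega
      have hts : Elementary (expandListAt ts (j - t.leaves)) := by
        intro x hx; exact he x (List.mem_cons_of_mem _ hx)
      obtain ⟨h1, h2⟩ := ih hj' hts
      constructor
      · intro x hx
        rcases List.mem_cons.mp hx with rfl | hx'
        · exact he x List.mem_cons_self
        · exact h1 x hx' 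
      · exact List.Forall₂.cons (R_refl t) h2

lemma forall₂R_trans {a b c : List T} (h1 : List.Forall₂ R a b) (h2 : List.Forall₂ R b c) :
    List.Forall₂ R a c := by
  induction h1 generalizing c with
  | nil => cases h2; exact List.Forall₂.nil
  | cons hr h ih =>
    cases h2 with
    | cons hr' h' => exact List.Forall₂.cons (hr.trans hr') (ih h')

lemma expands_forall₂ {e e' : List T} (h : Expands e e') (he : Elementary e) :
    Elementary e' ∧ List.Forall₂ R e e' := by
  induction h with
  | refl f => exact ⟨he, List.forall₂_same.2 fun x _ => R_refl x⟩
  | step k hk h ih =>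
    obtain ⟨hg, hge⟩ := stepA hk he
    obtain ⟨he', h'⟩ := ih hg
    exact ⟨he', forall₂R_trans hge h'⟩

lemma expandListAt_append_left {a : List T} (b : List T) {k : ℕ} (hk : k < leavesList a) :
    expandListAt (a ++ b) k = expandListAt a k ++ b := by
  induction a generalizing k with
  | nil => simp [leavesList] at hk
  | cons t ts ih =>
    rw [leavesList_cons] at hk
    by_cases h : k < t.leaves
    · simp [expandListAt, if_pos h]
    · simp only [List.cons_append, expandListAt, if_neg h, List.append_eq]
      rw [ih (by omega)]

lemma expandListAt_append_right (a : List T) (b : List T) (k : ℕ) :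
    expandListAt (a ++ b) (leavesList a + k) = a ++ expandListAt b k := by
  induction a with
  | nil => simp [leavesList]
  | cons t ts ih =>
    rw [leavesList_cons]
    have h : ¬ (t.leaves + leavesList ts + k < t.leaves) := by omega
    simp only [List.cons_append, expandListAt, if_neg h, List.append_eq]
    have : t.leaves + leavesList ts + k - t.leaves = leavesList ts + k := by omega
    rw [this, ih]

lemma Expands.trans' {a b c : List T} (h1 : Expands a b) (h2 : Expands b c) : Expands a c := by
  induction h1 with
  | refl f => exact h2
  | step k hk h ih => exact Expands.step k hk (ih h2)

lemma expands_append_left {a a' : List T} (b : List T) (h : Expands a a') :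
    Expands (a ++ b) (a' ++ b) := by
  induction h with
  | refl f => exact Expands.refl _
  | step k hk h ih =>
    rw [← expandListAt_append_left b hk]
    exact Expands.step k (by rw [leavesList_append]; omega) ih

lemma expands_append_right (a : List T) {b b' : List T} (h : Expands b b') :
    Expands (a ++ b) (a ++ b') := by
  induction h with
  | refl f => exact Expands.refl _
  | step k hk h ih =>
    rw [← expandListAt_append_right a _ k]
    exact Expands.step _ (by rw [leavesList_append]; omega) ih

lemma forall₂_expands {e e' : List T} (h : List.Forall₂ R e e') : Expands e e' := by
  induction h with
  | nil => exact Expands.refl []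
  | @cons t t' l l' hr h ih =>
    have h1 : Expands [t] [t'] := by
      rcases hr with rfl | ⟨rfl, rfl⟩
      · exact Expands.refl _
      · have := Expands.step 0 (by simp [leavesList, T.leaves]) (Expands.refl [T.leaf])
        simpa [expandListAt, T.expandAt, T.leaves] using this
    have := (expands_append_left l h1).trans' (expands_append_right [t'] ih)
    simpa using this

lemma expands_iff {e e' : List T} (he : Elementary e) :
    Expands e e' ↔ List.Forall₂ R e e' :=
  ⟨fun h => (expands_forall₂ h he).2, forall₂_expands⟩

lemma countP_eq_card_filter (l : List T) (p : T → Bool) :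
    (Finset.univ.filter fun i : Fin l.length => p (l.get i)).card = l.countP p := by
  induction l with
  | nil => simp
  | cons t ts ih =>
    rw [List.countP_cons, ← ih]
    rw [Finset.card_filter, Finset.card_filter]
    have h1 : (∑ i : Fin (t :: ts).length, if p ((t :: ts).get i) = true then 1 else 0)
        = ∑ i : Fin (ts.length + 1), if p ((t :: ts).get i) = true then 1 else 0 := rfl
    rw [h1, Fin.sum_univ_succ]
    have h3 : (∑ i : Fin ts.length, if p ((t :: ts).get i.succ) = true then 1 else 0)
        = ∑ i : Fin ts.length, if p (ts.get i) = true then 1 else 0 := rfl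
    rw [h3]
    have h2 : ((t :: ts).get (0 : Fin (ts.length + 1))) = t := rfl
    rw [h2]
    omega

/-- Caret positions of a forest. -/
def sF (e : List T) : Finset (Fin e.length) :=
  Finset.univ.filter (fun i => e.get i = caret)

lemma mem_sF {e : List T} {i : Fin e.length} : i ∈ sF e ↔ e.get i = caret := by
  simp [sF]

lemma mem_sF' {e : List T} {i : Fin e.length} : i ∈ sF e ↔ e[(i : ℕ)] = caret := by
  simp [sF, List.get_eq_getElem]

lemma card_sF (e : List T) : (sF e).card = e.countP (fun t => decide (t = caret)) := by
  rw [← countP_eq_card_filter]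
  congr 1
  ext i
  simp [sF]

noncomputable def sigmaF (e : List T) (k : ℕ) (h : (sF e).card = k) :
    {i // i ∈ sF e} ≃ Fin k := (sF e).equivFin.trans (finCongr h)

noncomputable def fwdF (e : List T) (k : ℕ) (h : (sF e).card = k) (a : List T) :
    Finset (Fin k) :=
  Finset.univ.filter fun j => a.getD ((sigmaF e k h).symm j).val.val T.leaf = caret

noncomputable def invF (e : List T) (k : ℕ) (h : (sF e).card = k) (S : Finset (Fin k)) :
    List T :=
  List.ofFn fun i : Fin e.length =>
    if hi : i ∈ sF e then (if sigmaF e k h ⟨i, hi⟩ ∈ S then caret else T.leaf) else T.leaf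

lemma getD_ofFn {n : ℕ} (f : Fin n → T) (i : Fin n) :
    (List.ofFn f).getD i.val T.leaf = f i := by
  rw [List.getD_eq_getElem _ _ (by simpa using i.2), List.getElem_ofFn]

lemma lenSub {e e' : List T} (he : Elementary e) (h : Expands e e') :
    e'.length = e.length :=
  (List.Forall₂.length_eq ((expands_iff he).1 h)).symm

lemma getD_mem_or {l : List T} (hl : Elementary l) (i : ℕ) :
    l.getD i T.leaf = T.leaf ∨ l.getD i T.leaf = caret := by
  by_cases h : i < l.length
  · rw [List.getD_eq_getElem _ _ h]
    exact hl _ (List.getElem_mem h)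
  · rw [List.getD_eq_default _ _ (by omega)]
    exact Or.inl rfl

lemma R_getD {e e' : List T} (he : Elementary e) (h : Expands e e') (i : Fin e.length) :
    R (e.get i) (e'.getD i.val T.leaf) := by
  have hf := (expands_iff he).1 h
  rw [List.forall₂_iff_get] at hf
  obtain ⟨hl, hg⟩ := hf
  have h2 : i.val < e'.length := by omega
  rw [List.getD_eq_getElem _ _ h2]
  exact hg i.val i.2 h2

lemma caret_ne_leaf : caret ≠ T.leaf := by simp [caret]

lemma caret_mono {e a : List T} (he : Elementary e) (h : Expands e a) (i : Fin e.length)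
    (hc : a.getD i.val T.leaf = caret) : e.get i = caret := by
  rcases R_getD he h i with h1 | ⟨h1, h2⟩
  · rw [← h1, hc]
  · exact absurd (hc ▸ h2) caret_ne_leaf

lemma leaf_of_not_caret {e a : List T} (he : Elementary e) (h : Expands e a)
    (i : Fin e.length) (hnc : e.get i ≠ caret) : a.getD i.val T.leaf = T.leaf := by
  rcases R_getD he h i with h1 | ⟨h1, h2⟩
  · rw [h1]
    exact (he _ (e.get_mem i)).resolve_right hnc
  · exact h2

lemma expands_iff_pointwise {e a b : List T} (he : Elementary e)
    (ha : Expands e a) (hb : Expands e b) :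
    Expands b a ↔
      ∀ i : Fin e.length, a.getD i.val T.leaf = caret → b.getD i.val T.leaf = caret := by
  have hela : Elementary a := (expands_forall₂ ha he).1
  have helb : Elementary b := (expands_forall₂ hb he).1
  have hla := lenSub he ha
  have hlb := lenSub he hb
  rw [expands_iff helb, List.forall₂_iff_get]
  constructor
  · rintro ⟨hl, hg⟩ i hc
    have h2 : i.val < a.length := by omega
    have h3 : i.val < b.length := by omega
    rw [List.getD_eq_getElem _ _ h2] at hc
    rw [List.getD_eq_getElem _ _ h3]
    rcases hg i.val h3 h2 with h1 | ⟨h1, _⟩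
    · simp only [List.get_eq_getElem] at h1
      exact h1.symm.trans hc
    · simp only [List.get_eq_getElem] at h1
      exact h1
  · intro hp
    refine ⟨by omega, ?_⟩
    intro i h1 h2
    have hi : i < e.length := by omega
    by_cases hc : a.getD i T.leaf = caret
    · have hbc := hp ⟨i, hi⟩ hc
      rw [List.getD_eq_getElem _ _ h2] at hc
      rw [List.getD_eq_getElem _ _ h1] at hbc
      left
      simp only [List.get_eq_getElem]
      rw [hc, hbc]
    · have hal : a.getD i T.leaf = T.leaf := (getD_mem_or hela i).resolve_right hc
      rw [List.getD_eq_getElem _ _ h2] at hal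
      by_cases hcb : b[i] = caret
      · right
        simp only [List.get_eq_getElem]
        exact ⟨hcb, hal⟩
      · left
        simp only [List.get_eq_getElem]
        rw [hal, (helb _ (List.getElem_mem h1)).resolve_right hcb]

lemma expands_invF {e : List T} (he : Elementary e) (k : ℕ) (h : (sF e).card = k)
    (S : Finset (Fin k)) : Expands e (invF e k h S) := by
  apply forall₂_expands
  rw [List.forall₂_iff_get]
  refine ⟨by simp [invF], ?_⟩
  intro i h1 h2
  simp only [invF, List.get_eq_getElem, List.getElem_ofFn]
  split_ifs with hd hS
  · exact Or.inl (mem_sF'.1 hd).symm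
  · exact Or.inr ⟨mem_sF'.1 hd, rfl⟩
  · have hleaf : e[i] = T.leaf := by
      refine (he _ (List.getElem_mem h1)).resolve_right (fun hc => hd (mem_sF'.2 ?_))
      exact hc
    exact Or.inl hleaf.symm

lemma invF_getD (e : List T) (k : ℕ) (h : (sF e).card = k) (S : Finset (Fin k))
    (i : Fin e.length) (hi : i ∈ sF e) :
    (invF e k h S).getD i.val T.leaf
      = if sigmaF e k h ⟨i, hi⟩ ∈ S then caret else T.leaf := by
  simp only [invF, getD_ofFn]
  rw [dif_pos hi]

lemma fwdF_mem {e : List T} {k : ℕ} {h : (sF e).card = k} {a : List T} {j : Fin k} :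
    j ∈ fwdF e k h a ↔ a.getD ((sigmaF e k h).symm j).val.val T.leaf = caret := by
  simp [fwdF]

lemma right_inv (e : List T) (k : ℕ) (h : (sF e).card = k) (S : Finset (Fin k)) :
    fwdF e k h (invF e k h S) = S := by
  ext j
  rw [fwdF_mem]
  rw [invF_getD e k h S ((sigmaF e k h).symm j).val ((sigmaF e k h).symm j).2]
  have h2 : (⟨((sigmaF e k h).symm j).val, ((sigmaF e k h).symm j).2⟩ :
      {x // x ∈ sF e}) = (sigmaF e k h).symm j := rfl
  rw [h2, Equiv.apply_symm_apply]
  split_ifs with hS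
  · simp [hS]
  · simp [hS, Ne.symm caret_ne_leaf]

lemma left_inv {e : List T} (he : Elementary e) (k : ℕ) (h : (sF e).card = k)
    {a : List T} (ha : Expands e a) : invF e k h (fwdF e k h a) = a := by
  have hla := lenSub he ha
  have hela : Elementary a := (expands_forall₂ ha he).1
  apply List.ext_getElem (by simp [invF, hla])
  intro i h1 h2
  have hi : i < e.length := by simpa [invF] using h1
  simp only [invF, List.getElem_ofFn]
  by_cases hd : (⟨i, hi⟩ : Fin e.length) ∈ sF e
  · rw [dif_pos hd]
    have hmem : sigmaF e k h ⟨⟨i, hi⟩, hd⟩ ∈ fwdF e k h a ↔ a.getD i T.leaf = caret := by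
      rw [fwdF_mem, Equiv.symm_apply_apply]
    rw [List.getD_eq_getElem _ _ h2] at hmem
    by_cases hc : a[i] = caret
    · rw [if_pos (hmem.2 hc), hc]
    · rw [if_neg (fun hx => hc (hmem.1 hx))]
      exact ((hela _ (List.getElem_mem h2)).resolve_right hc).symm
  · rw [dif_neg hd]
    have hleaf : a.getD i T.leaf = T.leaf :=
      leaf_of_not_caret he ha ⟨i, hi⟩ (fun hc => hd (mem_sF.2 hc))
    rw [List.getD_eq_getElem _ _ h2] at hleaf
    exact hleaf.symm

lemma fwd_subset {e : List T} (he : Elementary e) (k : ℕ) (h : (sF e).card = k)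
    {a b : List T} (ha : Expands e a) (hb : Expands e b) :
    Expands b a ↔ fwdF e k h a ⊆ fwdF e k h b := by
  rw [expands_iff_pointwise he ha hb]
  constructor
  · intro hp j hj
    rw [fwdF_mem] at hj ⊢
    exact hp _ hj
  · intro hsub i hc
    have hie : i ∈ sF e := mem_sF.2 (caret_mono he ha i hc)
    have hj : sigmaF e k h ⟨i, hie⟩ ∈ fwdF e k h a := by
      rw [fwdF_mem, Equiv.symm_apply_apply]
      exact hc
    have := hsub hj
    rw [fwdF_mem, Equiv.symm_apply_apply] at this
    exact this

/-- If `e` is an elementary forest with exactly `k` carets, then the set of forests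
of which `e` is an expansion, ordered by the expansion relation, is order-isomorphic
to the boolean lattice of subsets of a `k`-element set.  In particular all such
forests are elementary, and there are `2^k` of them. -/
theorem interval_below_elementary_is_boolean_lattice
    (e : List T) (he : e ≠ []) (helem : Elementary e) (k : ℕ)
    (hk : e.countP (fun t => decide (t = caret)) = k) :
    (∀ e' : List T, Expands e e' → Elementary e') ∧
    (∃ φ : {e' : List T // Expands e e'} ≃ Finset (Fin k),
      ∀ a b : {e' : List T // Expands e e'},
        Expands b.val a.val ↔ φ a ⊆ φ b) ∧
    Set.ncard {e' : List T | Expands e e'} = 2 ^ k := by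
  have h : (sF e).card = k := (card_sF e).trans hk
  let φ : {e' : List T // Expands e e'} ≃ Finset (Fin k) :=
    ⟨fun a => fwdF e k h a.val, fun S => ⟨invF e k h S, expands_invF helem k h S⟩,
     fun a => Subtype.ext (left_inv helem k h a.2), fun S => right_inv e k h S⟩
  refine ⟨fun e' h' => (expands_forall₂ h' helem).1,
    ⟨φ, fun a b => fwd_subset helem k h a.2 b.2⟩, ?_⟩
  have hc : Nat.card {e' : List T // Expands e e'} = 2 ^ k := by
    rw [Nat.card_congr φ, Nat.card_eq_fintype_card, Fintype.card_finset, Fintype.card_fin]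
  rw [← Nat.card_coe_set_eq]
  exact hc
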